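/- If no error occurs, decoding returns the trivial syndrome and the original data: for every c = (c(0), c(1)) ∈ ℂ² there is a nonzero complex scalar α independent of c such that T(f(c)) = α · |0000⟩ ⊗ (c(0)|0⟩ + c(1)|1⟩). -/

import Mathlib

open scoped BigOperators

noncomputable section

/-- The 5-qubit state space `V₅ = (Fin 5 → Fin 2) → ℂ ≅ ℂ^32` with the standard
Hermitian inner product. -/
abbrev V5 : Type := EuclideanSpace ℂ (Fin 5 → Fin 2)

/-- The phase exponent `γ(x,y) = x(y₀+y₁+y₂) + y₀y₁ + y₀y₃ + y₁y₄ + y₂y₃ + y₂y₄ + y₃y₄`,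
read modulo 2 via `(-1)^·`. -/
def gam (x : Fin 2) (y : Fin 5 → Fin 2) : ℕ :=
  x.val * ((y 0).val + (y 1).val + (y 2).val)
    + (y 0).val * (y 1).val + (y 0).val * (y 3).val + (y 1).val * (y 4).val
    + (y 2).val * (y 3).val + (y 2).val * (y 4).val + (y 3).val * (y 4).val

/-- The graph-code encoding `f : ℂ² → V₅`, `f(c)(y) = Σ_x (−1)^{γ(x,y)} c(x)`
(normalization factors omitted). -/
def enc (c : Fin 2 → ℂ) : V5 := WithLp.toLp 2 fun y => ∑ x : Fin 2, (-1 : ℂ) ^ gam x y * c x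

/-- The decoding phase exponent `θ`, with `z = (l₀, l₁, l₃, l₄, x̂)`. -/
def theta (y z : Fin 5 → Fin 2) : ℕ :=
  (z 4).val * ((y 0).val + (y 1).val + (y 2).val)
    + (y 0).val * (y 1).val + (y 0).val * (y 3).val + (y 1).val * (y 4).val
    + (y 2).val * (y 3).val + (y 2).val * (y 4).val + (y 3).val * (y 4).val
    + (y 0).val * (z 0).val + (y 1).val * (z 1).val + (y 3).val * (z 2).val
    + (y 4).val * (z 3).val

/-- The graph decoding operator `T : V₅ → V₅`,
`T|y⟩ = Σ_{l₀l₁l₃l₄, x̂} (−1)^θ |l₀l₁l₃l₄x̂⟩`. -/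
def dec (ψ : V5) : V5 := WithLp.toLp 2 fun z => ∑ y : Fin 5 → Fin 2, (-1 : ℂ) ^ theta y z * ψ y

/-- The product state `|s₀s₁s₂s₃⟩ ⊗ (a|0⟩ + b|1⟩)` in `V₅`: four syndrome qubits
followed by one data qubit. -/
def synData (s : Fin 4 → Fin 2) (a b : ℂ) : V5 :=
  WithLp.toLp 2 fun y => (if y 0 = s 0 ∧ y 1 = s 1 ∧ y 2 = s 2 ∧ y 3 = s 3 then (1 : ℂ) else 0)
    * (if y 4 = 0 then a else b)

/-! The phase `θ(y, z) + γ(x, y)` contains the quadratic form of the graph twice, so modulo 2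
it is the linear form `y ↦ Σᵢ yᵢ wᵢ` with weights `w = phaseCoeff x z`. Each amplitude of
`T(f(c))` is therefore a character sum over `{0,1}⁵`, which is `32` when the character is trivial
and `0` otherwise; the character is trivial exactly at `z = (0,0,0,0,x)`. -/

open Finset

theorem sum_neg_one_pow_sum_mul {ι R : Type*} [Fintype ι] [DecidableEq ι] [CommRing R]
    (a : ι → ℕ) :
    ∑ y : ι → Fin 2, (-1 : R) ^ (∑ i, (y i).val * a i)
      = if ∀ i, Even (a i) then 2 ^ Fintype.card ι else 0 := by
  have factor (i : ι) : ∑ b : Fin 2, (-1 : R) ^ (b.val * a i) = 1 + (-1) ^ a i := by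
    simp [Fin.sum_univ_two]
  simp_rw [← prod_pow_eq_pow_sum]
  rw [← Fintype.prod_sum (fun i (b : Fin 2) => (-1 : R) ^ (b.val * a i))]
  simp_rw [factor]
  split_ifs with h
  · rw [prod_congr rfl fun i _ => by rw [(h i).neg_one_pow, one_add_one_eq_two], prod_const,
      card_univ]
  · push Not at h
    obtain ⟨i, hi⟩ := h
    exact prod_eq_zero (mem_univ i) (by simp [Nat.not_even_iff_odd.mp hi])

def phaseCoeff (x : Fin 2) (z : Fin 5 → Fin 2) : Fin 5 → ℕ :=
  ![(z 0).val + (z 4).val + x.val, (z 1).val + (z 4).val + x.val, (z 4).val + x.val,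
    (z 2).val, (z 3).val]

theorem theta_add_gam (x : Fin 2) (y z : Fin 5 → Fin 2) :
    theta y z + gam x y
      = 2 * ((y 0).val * (y 1).val + (y 0).val * (y 3).val + (y 1).val * (y 4).val
          + (y 2).val * (y 3).val + (y 2).val * (y 4).val + (y 3).val * (y 4).val)
        + ∑ i, (y i).val * phaseCoeff x z i := by
  simp only [theta, gam, phaseCoeff, Fin.sum_univ_five, Matrix.cons_val_zero,
    Matrix.cons_val_one, Matrix.cons_val]
  ring

theorem neg_one_pow_theta_add_gam {R : Type*} [Monoid R] [HasDistribNeg R]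
    (x : Fin 2) (y z : Fin 5 → Fin 2) :
    (-1 : R) ^ (theta y z + gam x y) = (-1) ^ (∑ i, (y i).val * phaseCoeff x z i) := by
  rw [theta_add_gam, pow_add, pow_mul, neg_one_sq, one_pow, one_mul]

theorem forall_even_phaseCoeff_iff (x : Fin 2) (z : Fin 5 → Fin 2) :
    (∀ i, Even (phaseCoeff x z i)) ↔ (z 0 = 0 ∧ z 1 = 0 ∧ z 2 = 0 ∧ z 3 = 0) ∧ z 4 = x := by
  revert x z
  decide

theorem sum_neg_one_pow_theta_add_gam (x : Fin 2) (z : Fin 5 → Fin 2) :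
    ∑ y, (-1 : ℂ) ^ (theta y z + gam x y)
      = if (z 0 = 0 ∧ z 1 = 0 ∧ z 2 = 0 ∧ z 3 = 0) ∧ z 4 = x then 32 else 0 := by
  simp_rw [neg_one_pow_theta_add_gam, sum_neg_one_pow_sum_mul, forall_even_phaseCoeff_iff]
  norm_num

/-- No error: decoding returns the trivial syndrome `0000` and the original data,
up to a nonzero scalar independent of `c`. -/
theorem decode_no_error :
    ∃ α : ℂ, α ≠ 0 ∧ ∀ c : Fin 2 → ℂ,
      dec (enc c) = α • synData ![0, 0, 0, 0] (c 0) (c 1) := by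
  refine ⟨32, by norm_num, fun c => ?_⟩
  ext z
  calc dec (enc c) z = ∑ x, c x * ∑ y, (-1 : ℂ) ^ (theta y z + gam x y) := by
        simp only [dec, enc, PiLp.toLp_apply, mul_sum, pow_add]
        rw [sum_comm]
        simp only [mul_comm, mul_assoc]
    _ = ((32 : ℂ) • synData ![0, 0, 0, 0] (c 0) (c 1)) z := by
        simp_rw [sum_neg_one_pow_theta_add_gam]
        by_cases hP : z 0 = 0 ∧ z 1 = 0 ∧ z 2 = 0 ∧ z 3 = 0
        · obtain h4 | h4 : z 4 = 0 ∨ z 4 = 1 := by omega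
          all_goals simp [synData, hP, h4, mul_comm]
        · simp [synData, hP]
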